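/- arXiv:1707.01674 — 5 statements merged into one kernel-verified Lean document; each statement's English description precedes it below -/
import Mathlib

section
/- Let I ∈ 𝕊, n ∈ ℤ and a : (0,∞) → ℍ be twice continuously differentiable. Define g : {(x,y) ∈ ℝ×(0,∞)} → ℍ in polar coordinates x = r cos θ, y = r sin θ (r > 0, 0 < θ < π) by g(x,y) = (cos nθ + I sin nθ)·a(r). Then at every such point, −(1/4)(∂²g/∂x² + ∂²g/∂y²) + (1/2)(x·∂g/∂x + y·∂g/∂y) + (I/2)·(x·∂g/∂y − y·∂g/∂x) = −((cos nθ + I sin nθ)/(4r²))·[ r²·a''(r) + (1 − 2r²)·r·a'(r) + (2n r² − n²)·a(r) ], where I acts by left multiplication. -/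
/-!
In polar coordinates `g = cis(nθ) · a(r)`, where `cis t = cos t + I sin t` satisfies
`cis' = I · cis` because `I` commutes with `cis`. The three operators in the identity are the
Laplacian `∂²_r + r⁻¹ ∂_r + r⁻² ∂²_θ`, the Euler operator `x ∂_x + y ∂_y = r ∂_r` and the
rotation `x ∂_y - y ∂_x = ∂_θ`, and on `g` the angular derivative `∂_θ` acts as left
multiplication by `n I`. On the upper half plane `θ = π/2 - arctan (x / y)`, which makes the
partial derivatives of `θ` elementary.
-/

open Quaternion Real

theorem mul_mul_of_sq_eq_neg_one {R : Type*} [Ring R] {I : R} (hI : I ^ 2 = -1) (q : R) :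
    I * (I * q) = -q := by
  rw [← mul_assoc, ← sq, hI, neg_one_mul]

theorem ContDiffOn.hasDerivAt_deriv_of_isOpen {𝕜 E : Type*} [NontriviallyNormedField 𝕜]
    [NormedAddCommGroup E] [NormedSpace 𝕜 E] {f : 𝕜 → E} {s : Set 𝕜} (hf : ContDiffOn 𝕜 2 f s)
    (hs : IsOpen s) {x : 𝕜} (hx : x ∈ s) :
    HasDerivAt (deriv f) (deriv (deriv f) x) x := by
  rw [show (2 : WithTop ℕ∞) = 1 + 1 from rfl, contDiffOn_succ_iff_deriv_of_isOpen hs] at hf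
  exact ((hf.2.2.differentiableOn one_ne_zero).differentiableAt (hs.mem_nhds hx)).hasDerivAt

theorem hasDerivAt_sqrt_sq_add_sq_left {u v : ℝ} (h : u ^ 2 + v ^ 2 ≠ 0) :
    HasDerivAt (fun u => √(u ^ 2 + v ^ 2)) (u / √(u ^ 2 + v ^ 2)) u := by
  convert ((hasDerivAt_pow 2 u).add_const (v ^ 2)).sqrt h using 1
  field_simp
  norm_num
  ring

theorem hasDerivAt_sqrt_sq_add_sq_right {u v : ℝ} (h : u ^ 2 + v ^ 2 ≠ 0) :
    HasDerivAt (fun v => √(u ^ 2 + v ^ 2)) (v / √(u ^ 2 + v ^ 2)) v := by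
  simpa only [add_comm (u ^ 2)] using
    hasDerivAt_sqrt_sq_add_sq_left (v := u) (u := v) (by rwa [add_comm])

theorem arccos_div_sqrt_sq_add_sq {u v : ℝ} (hv : 0 < v) :
    arccos (u / √(u ^ 2 + v ^ 2)) = π / 2 - arctan (u / v) := by
  rw [arccos_eq_pi_div_two_sub_arcsin, arctan_eq_arcsin]
  congr 2
  rw [div_pow, one_add_div (by positivity), sqrt_div' _ (sq_nonneg v), sqrt_sq hv.le, add_comm]
  field_simp

theorem hasDerivAt_arccos_div_sqrt_left {u v : ℝ} (hv : 0 < v) :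
    HasDerivAt (fun u => arccos (u / √(u ^ 2 + v ^ 2))) (-v / (u ^ 2 + v ^ 2)) u := by
  simp only [arccos_div_sqrt_sq_add_sq hv]
  refine (((hasDerivAt_id' u).div_const v).arctan.const_sub (π / 2)).congr_deriv ?_
  field_simp
  ring

theorem hasDerivAt_arccos_div_sqrt_right {u v : ℝ} (hv : 0 < v) :
    HasDerivAt (fun v => arccos (u / √(u ^ 2 + v ^ 2))) (u / (u ^ 2 + v ^ 2)) v := by
  have h := ((hasDerivAt_const v u).div (hasDerivAt_id' v) hv.ne').arctan.const_sub (π / 2)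
  simp only [Pi.div_apply] at h
  refine (h.congr_of_eventuallyEq ?_).congr_deriv ?_
  · filter_upwards [Ioi_mem_nhds hv] with w hw using arccos_div_sqrt_sq_add_sq hw
  · field_simp
    ring

namespace Quaternion

noncomputable def cis (I : ℍ[ℝ]) (t : ℝ) : ℍ[ℝ] := (cos t : ℍ[ℝ]) + sin t • I

theorem hasDerivAt_cis {I : ℍ[ℝ]} (hI : I ^ 2 = -1) (t : ℝ) :
    HasDerivAt (cis I) (I * cis I t) t := by
  have hcis : cis I = fun t => cos t • (1 : ℍ[ℝ]) + sin t • I := by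
    funext s
    rw [cis, ← coe_mul_eq_smul (cos s) 1, mul_one]
  rw [hcis]
  refine (((hasDerivAt_cos t).smul_const (1 : ℍ[ℝ])).add
    ((hasDerivAt_sin t).smul_const I)).congr_deriv ?_
  rw [mul_add, mul_smul_comm, mul_smul_comm, ← sq, hI, mul_one]
  module

/-- `polarMode I n b` is `cis(nθ) · b(r)` written in the coordinates `(u, v)` of the upper half
plane. -/
noncomputable def polarMode (I : ℍ[ℝ]) (n : ℝ) (b : ℝ → ℍ[ℝ]) (u v : ℝ) : ℍ[ℝ] :=
  cis I (n * arccos (u / √(u ^ 2 + v ^ 2))) * b √(u ^ 2 + v ^ 2)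

variable {I : ℍ[ℝ]} {n : ℝ} {b b' b'' : ℝ → ℍ[ℝ]} {u v : ℝ}

theorem hasDerivAt_polarMode_left (hI : I ^ 2 = -1) (hb : ∀ r, 0 < r → HasDerivAt b (b' r) r)
    (hv : 0 < v) (u : ℝ) :
    HasDerivAt (fun u => polarMode I n b u v)
      ((-n * v / (u ^ 2 + v ^ 2)) • (I * polarMode I n b u v) +
        (u / √(u ^ 2 + v ^ 2)) • polarMode I n b' u v) u := by
  have h : u ^ 2 + v ^ 2 ≠ 0 := by positivity
  have hcis := (hasDerivAt_cis hI _).scomp u ((hasDerivAt_arccos_div_sqrt_left hv).const_mul n)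
  have hb := (hb _ (by positivity)).scomp u (hasDerivAt_sqrt_sq_add_sq_left h)
  refine (hcis.mul hb).congr_deriv ?_
  simp only [polarMode, smul_mul_assoc, mul_smul_comm, mul_assoc]
  congr 2
  ring

theorem hasDerivAt_polarMode_right (hI : I ^ 2 = -1) (hb : ∀ r, 0 < r → HasDerivAt b (b' r) r)
    (hv : 0 < v) :
    HasDerivAt (fun v => polarMode I n b u v)
      ((n * u / (u ^ 2 + v ^ 2)) • (I * polarMode I n b u v) +
        (v / √(u ^ 2 + v ^ 2)) • polarMode I n b' u v) v := by
  have h : u ^ 2 + v ^ 2 ≠ 0 := by positivity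
  have hcis := (hasDerivAt_cis hI _).scomp v
    ((hasDerivAt_arccos_div_sqrt_right (u := u) hv).const_mul n)
  have hb := (hb _ (by positivity)).scomp v (hasDerivAt_sqrt_sq_add_sq_right h)
  refine (hcis.mul hb).congr_deriv ?_
  simp only [polarMode, smul_mul_assoc, mul_smul_comm, mul_assoc]
  congr 2
  ring

theorem polarMode_euler (hI : I ^ 2 = -1) (hb : ∀ r, 0 < r → HasDerivAt b (b' r) r)
    (hv : 0 < v) :
    u • deriv (fun u => polarMode I n b u v) u + v • deriv (fun v => polarMode I n b u v) v =
      √(u ^ 2 + v ^ 2) • polarMode I n b' u v := by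
  have h : 0 < u ^ 2 + v ^ 2 := by positivity
  rw [(hasDerivAt_polarMode_left hI hb hv u).deriv, (hasDerivAt_polarMode_right hI hb hv).deriv]
  match_scalars
  · field_simp
    ring
  · field_simp
    rw [sq_sqrt h.le]

theorem polarMode_rotation (hI : I ^ 2 = -1) (hb : ∀ r, 0 < r → HasDerivAt b (b' r) r)
    (hv : 0 < v) :
    u • deriv (fun v => polarMode I n b u v) v - v • deriv (fun u => polarMode I n b u v) u =
      n • (I * polarMode I n b u v) := by
  have h : 0 < u ^ 2 + v ^ 2 := by positivity
  rw [(hasDerivAt_polarMode_left hI hb hv u).deriv, (hasDerivAt_polarMode_right hI hb hv).deriv]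
  match_scalars
  · field_simp
    ring
  · ring

theorem polarMode_laplacian (hI : I ^ 2 = -1) (hb : ∀ r, 0 < r → HasDerivAt b (b' r) r)
    (hb' : ∀ r, 0 < r → HasDerivAt b' (b'' r) r) (hv : 0 < v) :
    deriv (deriv fun u => polarMode I n b u v) u + deriv (deriv fun v => polarMode I n b u v) v =
      polarMode I n b'' u v + (√(u ^ 2 + v ^ 2))⁻¹ • polarMode I n b' u v -
        (n ^ 2 / (u ^ 2 + v ^ 2)) • polarMode I n b u v := by
  have h : 0 < u ^ 2 + v ^ 2 := by positivity
  have hsqrt : √(u ^ 2 + v ^ 2) ≠ 0 := by positivity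
  have hu : deriv (fun u => polarMode I n b u v) = fun u =>
      (-n * v / (u ^ 2 + v ^ 2)) • (I * polarMode I n b u v) +
        (u / √(u ^ 2 + v ^ 2)) • polarMode I n b' u v :=
    funext fun u => (hasDerivAt_polarMode_left hI hb hv u).deriv
  have hv' : deriv (fun v => polarMode I n b u v) =ᶠ[nhds v] fun v =>
      (n * u / (u ^ 2 + v ^ 2)) • (I * polarMode I n b u v) +
        (v / √(u ^ 2 + v ^ 2)) • polarMode I n b' u v := by
    filter_upwards [Ioi_mem_nhds hv] with w hw using (hasDerivAt_polarMode_right hI hb hw).deriv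
  have huu : HasDerivAt (fun u => (-n * v / (u ^ 2 + v ^ 2)) • (I * polarMode I n b u v) +
      (u / √(u ^ 2 + v ^ 2)) • polarMode I n b' u v) _ u :=
    (((hasDerivAt_const u (-n * v)).div ((hasDerivAt_pow 2 u).add_const _) h.ne').smul
      ((hasDerivAt_polarMode_left hI hb hv u).const_mul I)).add
      (((hasDerivAt_id' u).div (hasDerivAt_sqrt_sq_add_sq_left h.ne') hsqrt).smul
        (hasDerivAt_polarMode_left hI hb' hv u))
  have hvv : HasDerivAt (fun v => (n * u / (u ^ 2 + v ^ 2)) • (I * polarMode I n b u v) +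
      (v / √(u ^ 2 + v ^ 2)) • polarMode I n b' u v) _ v :=
    (((hasDerivAt_const v (n * u)).div ((hasDerivAt_pow 2 v).const_add _) h.ne').smul
      ((hasDerivAt_polarMode_right hI hb hv).const_mul I)).add
      (((hasDerivAt_id' v).div (hasDerivAt_sqrt_sq_add_sq_right h.ne') hsqrt).smul
        (hasDerivAt_polarMode_right hI hb' hv))
  rw [hu, hv'.deriv_eq, huu.deriv, hvv.deriv]
  simp only [mul_add, mul_smul_comm, mul_mul_of_sq_eq_neg_one hI, Pi.div_apply]
  match_scalars <;> norm_num <;> field_simp <;> (try rw [sq_sqrt h.le]) <;> ring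

end Quaternion

/-- For `I ∈ 𝕊`, `n ∈ ℤ` and `a : (0,∞) → ℍ` twice continuously
differentiable, the function `g(x,y) = (cos nθ + I sin nθ)·a(r)` (polar coordinates
`x = r cos θ`, `y = r sin θ`, `r > 0`, `0 < θ < π`) satisfies the stated identity for
the sliced Laplacian acting in the cartesian coordinates `(x,y)`, `y > 0`. -/
theorem stmt0 (I : ℍ[ℝ]) (hI : I ^ 2 = -1) (n : ℤ) (a : ℝ → ℍ[ℝ])
    (ha : ContDiffOn ℝ 2 a (Set.Ioi 0)) (x y : ℝ) (hy : 0 < y)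
    (g : ℝ → ℝ → ℍ[ℝ])
    (hg : ∀ u v : ℝ, 0 < v →
      g u v =
        (((Real.cos ((n : ℝ) * Real.arccos (u / Real.sqrt (u ^ 2 + v ^ 2))) : ℝ) : ℍ[ℝ]) +
            Real.sin ((n : ℝ) * Real.arccos (u / Real.sqrt (u ^ 2 + v ^ 2))) • I) *
          a (Real.sqrt (u ^ 2 + v ^ 2))) :
    (-(1 / 4 : ℝ)) • (deriv (deriv fun u : ℝ => g u y) x +
        deriv (deriv fun v : ℝ => g x v) y) +
      (1 / 2 : ℝ) • (x • deriv (fun u : ℝ => g u y) x + y • deriv (fun v : ℝ => g x v) y) +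
      (1 / 2 : ℝ) • (I * (x • deriv (fun v : ℝ => g x v) y -
        y • deriv (fun u : ℝ => g u y) x)) =
    (-(1 / (4 * Real.sqrt (x ^ 2 + y ^ 2) ^ 2)) : ℝ) •
      ((((Real.cos ((n : ℝ) *
              Real.arccos (x / Real.sqrt (x ^ 2 + y ^ 2))) : ℝ) : ℍ[ℝ]) +
          Real.sin ((n : ℝ) * Real.arccos (x / Real.sqrt (x ^ 2 + y ^ 2))) • I) *
        ((Real.sqrt (x ^ 2 + y ^ 2) ^ 2) •
            deriv (deriv a) (Real.sqrt (x ^ 2 + y ^ 2)) +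
          ((1 - 2 * Real.sqrt (x ^ 2 + y ^ 2) ^ 2) * Real.sqrt (x ^ 2 + y ^ 2)) •
            deriv a (Real.sqrt (x ^ 2 + y ^ 2)) +
          (2 * (n : ℝ) * Real.sqrt (x ^ 2 + y ^ 2) ^ 2 - (n : ℝ) ^ 2) •
            a (Real.sqrt (x ^ 2 + y ^ 2)))) := by
  have ha' : ∀ r, 0 < r → HasDerivAt a (deriv a r) r := fun r hr =>
    ((ha.differentiableOn two_ne_zero).differentiableAt (Ioi_mem_nhds hr)).hasDerivAt
  have ha'' : ∀ r, 0 < r → HasDerivAt (deriv a) (deriv (deriv a) r) r := fun r hr =>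
    ha.hasDerivAt_deriv_of_isOpen isOpen_Ioi hr
  have hgu : (fun u => g u y) = fun u => polarMode I n a u y := funext fun u => hg u y hy
  have hgv : (fun v => g x v) =ᶠ[nhds y] fun v => polarMode I n a x v := by
    filter_upwards [Ioi_mem_nhds hy] with v hv using hg x v hv
  rw [hgu, hgv.deriv_eq, hgv.deriv.deriv_eq, polarMode_laplacian hI ha' ha'' hy,
    polarMode_euler hI ha' hy, polarMode_rotation hI ha' hy, ← cis.eq_1]
  have h : 0 < x ^ 2 + y ^ 2 := by positivity
  simp only [polarMode, mul_add, mul_smul_comm, mul_mul_of_sq_eq_neg_one hI]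
  match_scalars <;> field_simp <;> rw [sq_sqrt h.le] <;> ring
end

section
/- For every μ ∈ ℍ and every nonnegative integer n, the series h(t) = ∑_{k=0}^∞ (t^k/k!)·(−μ)_k/(n+1)_k converges absolutely for every t ∈ ℝ, the resulting function h : ℝ → ℍ is twice differentiable, and it satisfies the left confluent hypergeometric equation with right eigenvalue: t·h''(t) + (n+1−t)·h'(t) = −h(t)·μ for all t ∈ ℝ. -/
/-!
The series is a power series `h(t) = ∑ tᵏ • aₖ` whose coefficients obey `‖aₖ‖ ≤ (‖μ‖ + 1)ᵏ / k!`,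
so it converges on all of `ℝ` and may be differentiated termwise twice. Termwise, the operator
`t h'' + (n + 1 - t) h'` has `k`-th coefficient `(k + n + 1)(k + 1) aₖ₊₁ - k aₖ`, and the
recursion `(k + 1)(k + n + 1) aₖ₊₁ = aₖ (k - μ)` coming from `(-μ)ₖ₊₁ = (-μ)ₖ (k - μ)` turns it
into `-aₖ μ`. The quaternion `μ` is multiplied on the right throughout, so no commutativity is
needed.
-/

open MeasureTheory Quaternion

noncomputable section

/-- quaternionic (left) Pochhammer symbol `(a)_k = a(a+1)⋯(a+k-1)` -/
def pochQ (a : ℍ[ℝ]) (k : ℕ) : ℍ[ℝ] := ((List.range k).map fun i => a + (i : ℍ[ℝ])).prod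

open scoped Nat

def derivCoeff {E : Type*} [AddCommGroup E] [Module ℝ E] (a : ℕ → E) (k : ℕ) : E :=
  ((k : ℝ) + 1) • a (k + 1)

section ExpBounded

variable {E : Type*} [NormedAddCommGroup E] [NormedSpace ℝ E] {a : ℕ → E} {C x : ℝ}

theorem summable_norm_pow_smul_of_le (hb : ∀ k, ‖a k‖ ≤ C * x ^ k / k !) (t : ℝ) :
    Summable fun k : ℕ => ‖t ^ k • a k‖ := by
  refine .of_nonneg_of_le (fun k => norm_nonneg _) (fun k => ?_)
    ((Real.summable_pow_div_factorial (|t| * x)).mul_left C)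
  calc ‖t ^ k • a k‖ = |t| ^ k * ‖a k‖ := by rw [norm_smul, Real.norm_eq_abs, abs_pow]
    _ ≤ |t| ^ k * (C * x ^ k / k !) := by gcongr; exact hb k
    _ = C * ((|t| * x) ^ k / k !) := by ring

theorem norm_derivCoeff_le (hb : ∀ k, ‖a k‖ ≤ C * x ^ k / k !) (k : ℕ) :
    ‖derivCoeff a k‖ ≤ (C * x) * x ^ k / k ! := by
  calc ‖derivCoeff a k‖ = ((k : ℝ) + 1) * ‖a (k + 1)‖ := by
        rw [derivCoeff, norm_smul, Real.norm_of_nonneg (by positivity)]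
    _ ≤ ((k : ℝ) + 1) * (C * x ^ (k + 1) / (k + 1)!) := by gcongr; exact hb (k + 1)
    _ = (C * x) * x ^ k / k ! := by
        rw [Nat.factorial_succ]
        push_cast
        field_simp
        ring

variable [CompleteSpace E]

theorem hasDerivAt_tsum_pow_smul (hb : ∀ k, ‖a k‖ ≤ C * x ^ k / k !) (t : ℝ) :
    HasDerivAt (fun s : ℝ => ∑' k, s ^ k • a k) (∑' k, t ^ k • derivCoeff a k) t := by
  set R : ℝ := |t| + 1
  set u : ℕ → ℝ := fun k => k * (R ^ (k - 1) * (C * x ^ k / k !))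
  have hu : Summable u := by
    rw [← summable_nat_add_iff 1]
    refine ((Real.summable_pow_div_factorial (R * x)).mul_left (C * x)).congr fun k => ?_
    simp only [u, Nat.add_sub_cancel, Nat.factorial_succ]
    push_cast
    field_simp
    rw [mul_pow]
    ring
  have hbound :
      ∀ (k : ℕ), ∀ y ∈ Metric.ball (0 : ℝ) R, ‖((k : ℝ) * y ^ (k - 1)) • a k‖ ≤ u k := by
    intro k y hy
    rw [mem_ball_zero_iff, Real.norm_eq_abs] at hy
    calc ‖((k : ℝ) * y ^ (k - 1)) • a k‖ = k * |y| ^ (k - 1) * ‖a k‖ := by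
          rw [norm_smul, Real.norm_eq_abs, abs_mul, abs_pow, Nat.abs_cast]
      _ ≤ k * R ^ (k - 1) * (C * x ^ k / k !) := by gcongr; exact hb k
      _ = u k := by ring
  have ht : t ∈ Metric.ball (0 : ℝ) R := by simp [R]
  have hderiv := hasDerivAt_tsum_of_isPreconnected hu Metric.isOpen_ball
    (convex_ball (0 : ℝ) R).isPreconnected
    (fun k y _ => (hasDerivAt_pow k y).smul_const (a k)) hbound ht
    (summable_norm_pow_smul_of_le hb t).of_norm ht
  convert hderiv using 1
  rw [(Summable.of_norm_bounded hu fun k => hbound k t ht).tsum_eq_zero_add]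
  simp only [derivCoeff, CharP.cast_eq_zero, mul_zero, zero_smul, zero_add, smul_smul,
    Nat.add_sub_cancel, Nat.cast_succ, mul_comm]

theorem hasSum_pow_smul_natCast_smul (hb : ∀ k, ‖a k‖ ≤ C * x ^ k / k !) (t : ℝ) :
    HasSum (fun k : ℕ => t ^ k • ((k : ℝ) • a k)) (t • ∑' k, t ^ k • derivCoeff a k) := by
  have hsum :=
    ((summable_norm_pow_smul_of_le (norm_derivCoeff_le hb) t).of_norm.hasSum).const_smul t
  rw [← hasSum_nat_add_iff' 1]
  simpa [derivCoeff, smul_smul, pow_succ', mul_assoc] using hsum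

theorem hasSum_confluent_operator (hb : ∀ k, ‖a k‖ ≤ C * x ^ k / k !) (c t : ℝ) :
    HasSum (fun k : ℕ => t ^ k • (((k : ℝ) + c) • derivCoeff a k - (k : ℝ) • a k))
      (t • deriv (deriv fun s : ℝ => ∑' k, s ^ k • a k) t +
        (c - t) • deriv (fun s : ℝ => ∑' k, s ^ k • a k) t) := by
  have hb' := norm_derivCoeff_le hb
  have hd : deriv (fun s : ℝ => ∑' k, s ^ k • a k) = fun s => ∑' k, s ^ k • derivCoeff a k :=
    funext fun s => (hasDerivAt_tsum_pow_smul hb s).deriv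
  rw [hd, (hasDerivAt_tsum_pow_smul hb' t).deriv]
  have hsum := ((hasSum_pow_smul_natCast_smul hb' t).add
    ((summable_norm_pow_smul_of_le hb' t).of_norm.hasSum.const_smul c)).sub
    (hasSum_pow_smul_natCast_smul hb t)
  convert hsum using 1
  · funext k
    module
  · module

end ExpBounded

theorem pochQ_succ (a : ℍ[ℝ]) (k : ℕ) : pochQ a (k + 1) = pochQ a k * (a + k) := by
  simp [pochQ, List.range_succ]

theorem norm_pochQ_neg_le (μ : ℍ[ℝ]) (k : ℕ) :
    ‖pochQ (-μ) k‖ ≤ ∏ i ∈ Finset.range k, (‖μ‖ + i) := by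
  induction k with
  | zero => simp [pochQ]
  | succ k ih =>
    rw [pochQ_succ, Finset.prod_range_succ, norm_mul]
    have hk : ‖-μ + k‖ ≤ ‖μ‖ + k := by
      refine (norm_add_le _ _).trans_eq ?_
      rw [norm_neg, ← Quaternion.coe_natCast, Quaternion.norm_coe, Real.norm_natCast]
    gcongr

/-- The coefficient `(-μ)ₖ / (k! (n+1)ₖ)` of the confluent hypergeometric series. -/
def confluentCoeff (μ : ℍ[ℝ]) (n k : ℕ) : ℍ[ℝ] :=
  ((k ! : ℝ) * ∏ i ∈ Finset.range k, ((n : ℝ) + 1 + i))⁻¹ • pochQ (-μ) k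

theorem norm_confluentCoeff_le (μ : ℍ[ℝ]) (n k : ℕ) :
    ‖confluentCoeff μ n k‖ ≤ (‖μ‖ + 1) ^ k / k ! := by
  have hP : 0 < ∏ i ∈ Finset.range k, ((n : ℝ) + 1 + i) :=
    Finset.prod_pos fun i _ => by positivity
  have hpoch : ‖pochQ (-μ) k‖ ≤ (‖μ‖ + 1) ^ k * ∏ i ∈ Finset.range k, ((n : ℝ) + 1 + i) := by
    rw [← Finset.card_range k, ← Finset.prod_const, Finset.card_range, ← Finset.prod_mul_distrib]
    refine (norm_pochQ_neg_le μ k).trans (Finset.prod_le_prod (fun i _ => by positivity)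
      fun i _ => ?_)
    nlinarith [norm_nonneg μ, (i.cast_nonneg : (0 : ℝ) ≤ i), (n.cast_nonneg : (0 : ℝ) ≤ n)]
  calc ‖confluentCoeff μ n k‖
      = ((k ! : ℝ) * ∏ i ∈ Finset.range k, ((n : ℝ) + 1 + i))⁻¹ * ‖pochQ (-μ) k‖ := by
        rw [confluentCoeff, norm_smul, Real.norm_of_nonneg (by positivity)]
    _ ≤ ((k ! : ℝ) * ∏ i ∈ Finset.range k, ((n : ℝ) + 1 + i))⁻¹ *
          ((‖μ‖ + 1) ^ k * ∏ i ∈ Finset.range k, ((n : ℝ) + 1 + i)) := by gcongr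
    _ = (‖μ‖ + 1) ^ k / k ! := by field_simp

theorem natCast_add_smul_derivCoeff_confluentCoeff (μ : ℍ[ℝ]) (n k : ℕ) :
    ((k : ℝ) + ((n : ℝ) + 1)) • derivCoeff (confluentCoeff μ n) k =
      confluentCoeff μ n k * (-μ + k) := by
  have hscal : ((k : ℝ) + ((n : ℝ) + 1)) * ((k : ℝ) + 1) *
      ((k + 1)! * ∏ i ∈ Finset.range (k + 1), ((n : ℝ) + 1 + i))⁻¹ =
      ((k ! : ℝ) * ∏ i ∈ Finset.range k, ((n : ℝ) + 1 + i))⁻¹ := by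
    have hP : 0 < ∏ i ∈ Finset.range k, ((n : ℝ) + 1 + i) :=
      Finset.prod_pos fun i _ => by positivity
    rw [Finset.prod_range_succ, Nat.factorial_succ]
    push_cast
    field_simp
    ring
  rw [derivCoeff, confluentCoeff, confluentCoeff, pochQ_succ, smul_smul, smul_smul, hscal,
    smul_mul_assoc]

theorem confluentCoeff_recursion (μ : ℍ[ℝ]) (n k : ℕ) :
    ((k : ℝ) + ((n : ℝ) + 1)) • derivCoeff (confluentCoeff μ n) k -
      (k : ℝ) • confluentCoeff μ n k = -(confluentCoeff μ n k * μ) := by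
  rw [natCast_add_smul_derivCoeff_confluentCoeff, mul_add, mul_neg, ← Nat.cast_comm,
    ← nsmul_eq_mul, ← Nat.cast_smul_eq_nsmul ℝ]
  abel

/-- For every `μ ∈ ℍ` and nonnegative integer `n`, the series
`h(t) = ∑ (t^k/k!)·(−μ)_k/(n+1)_k` converges absolutely for every `t ∈ ℝ`, is twice
differentiable, and satisfies `t·h''(t) + (n+1−t)·h'(t) = −h(t)·μ`. -/
theorem stmt1 (μ : ℍ[ℝ]) (n : ℕ) :
    (∀ t : ℝ, Summable fun k : ℕ =>
      ‖((t ^ k / (Nat.factorial k * ∏ i ∈ Finset.range k, ((n : ℝ) + 1 + i))) : ℝ) •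
        pochQ (-μ) k‖) ∧
    (∀ t : ℝ, DifferentiableAt ℝ
      (fun s : ℝ => ∑' k : ℕ,
        ((s ^ k / (Nat.factorial k * ∏ i ∈ Finset.range k, ((n : ℝ) + 1 + i))) : ℝ) •
          pochQ (-μ) k) t) ∧
    (∀ t : ℝ, DifferentiableAt ℝ
      (deriv fun s : ℝ => ∑' k : ℕ,
        ((s ^ k / (Nat.factorial k * ∏ i ∈ Finset.range k, ((n : ℝ) + 1 + i))) : ℝ) •
          pochQ (-μ) k) t) ∧
    (∀ t : ℝ,
      t • deriv (deriv fun s : ℝ => ∑' k : ℕ,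
          ((s ^ k / (Nat.factorial k * ∏ i ∈ Finset.range k, ((n : ℝ) + 1 + i))) : ℝ) •
            pochQ (-μ) k) t +
        ((n : ℝ) + 1 - t) • deriv (fun s : ℝ => ∑' k : ℕ,
          ((s ^ k / (Nat.factorial k * ∏ i ∈ Finset.range k, ((n : ℝ) + 1 + i))) : ℝ) •
            pochQ (-μ) k) t =
      -((∑' k : ℕ,
          ((t ^ k / (Nat.factorial k * ∏ i ∈ Finset.range k, ((n : ℝ) + 1 + i))) : ℝ) •
            pochQ (-μ) k) * μ)) := by
  have hterm (s : ℝ) (k : ℕ) :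
      ((s ^ k / (Nat.factorial k * ∏ i ∈ Finset.range k, ((n : ℝ) + 1 + i))) : ℝ) •
        pochQ (-μ) k = s ^ k • confluentCoeff μ n k := by
    rw [confluentCoeff, smul_smul, div_eq_mul_inv]
  simp only [hterm]
  have hb (k : ℕ) : ‖confluentCoeff μ n k‖ ≤ 1 * (‖μ‖ + 1) ^ k / k ! :=
    by rw [one_mul]; exact norm_confluentCoeff_le μ n k
  have hd : deriv (fun s : ℝ => ∑' k, s ^ k • confluentCoeff μ n k) =
      fun s => ∑' k, s ^ k • derivCoeff (confluentCoeff μ n) k :=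
    funext fun s => (hasDerivAt_tsum_pow_smul hb s).deriv
  refine ⟨summable_norm_pow_smul_of_le hb,
    fun t => (hasDerivAt_tsum_pow_smul hb t).differentiableAt,
    fun t => hd ▸ (hasDerivAt_tsum_pow_smul (norm_derivCoeff_le hb) t).differentiableAt,
    fun t => (hasSum_confluent_operator hb _ t).unique ?_⟩
  simp only [confluentCoeff_recursion, smul_neg, ← smul_mul_assoc]
  exact ((summable_norm_pow_smul_of_le hb t).of_norm.hasSum.mul_right μ).neg
end
end

section
/- Fix a nonnegative integer m and for a nonnegative integer n set ψ_{m,n}(q) := qⁿ·₁F₁(−m; n+1; |q|²). Then for all nonnegative integers n ≠ k, ∫_{ℍ∖ℝ} conj(ψ_{m,n}(q))·ψ_{m,k}(q)·e^{−|q|²} dλ(q) = 0, where conj denotes quaternionic conjugation. -/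
open MeasureTheory Quaternion

noncomputable section

instance : MeasurableSpace ℍ[ℝ] := borel _
instance : BorelSpace ℍ[ℝ] := ⟨rfl⟩

/-- the surface measure `dσ` of the 2-sphere `𝕊 = {q : q² = -1}` of imaginary units,
realized as the 2-dimensional Hausdorff measure restricted to `𝕊`. -/
def sigmaS : Measure ℍ[ℝ] :=
  (MeasureTheory.Measure.hausdorffMeasure 2).restrict {q : ℍ[ℝ] | q ^ 2 = -1}

/-- the sliced measure `dλ` on `ℍ∖ℝ`: pushforward of `r dr dθ dσ(I)` on
`(0,∞)×(0,2π)×𝕊` under `(r,θ,I) ↦ r(cos θ + I sin θ)`. -/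
def slicedMeasure : Measure ℍ[ℝ] :=
  Measure.map
    (fun p : ℝ × ℝ × ℍ[ℝ] =>
      ((p.1 * Real.cos p.2.1 : ℝ) : ℍ[ℝ]) + (p.1 * Real.sin p.2.1) • p.2.2)
    ((((volume : Measure ℝ).restrict (Set.Ioi 0)).withDensity
        (fun r => ENNReal.ofReal r)).prod
      ((((volume : Measure ℝ)).restrict (Set.Ioo 0 (2 * Real.pi))).prod sigmaS))

/-- truncated confluent hypergeometric `₁F₁(-m; c; t)` -/
def F1 (m : ℕ) (c : ℝ) (t : ℝ) : ℝ :=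
  ∑ j ∈ Finset.range (m + 1),
    ((∏ i ∈ Finset.range j, (-(m : ℝ) + i)) /
        ((∏ i ∈ Finset.range j, (c + i)) * Nat.factorial j)) * t ^ j

/-! On the slice through an imaginary unit `J`, the point `q = r (cos θ + J sin θ)` is the image of
`r e^{iθ}` under the algebra embedding `ℂ → ℍ`, `i ↦ J`, which commutes with conjugation. Hence
`conj(qⁿ) qᵏ = r^{n+k} (cos((k-n)θ) + J sin((k-n)θ))`, while `e^{-|q|²}` and the `₁F₁` factors are
real and radial. The integral therefore splits into a radial integral times
`∫ (cos((k-n)θ) + J sin((k-n)θ)) dθ dσ(J)`, and the `θ`-integral vanishes for `n ≠ k`. Fubini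
needs `σ(𝕊) < ∞`, which holds because spherical coordinates exhibit `𝕊` as a Lipschitz image of a
disc in `ℝ²`. -/

open ComplexConjugate

namespace Quaternion

variable {R : Type*} [CommRing R] [LinearOrder R] [IsStrictOrderedRing R]

lemma re_eq_zero_of_sq_eq_neg_one {J : ℍ[R]} (hJ : J ^ 2 = -1) : J.re = 0 := by
  rw [sq, Quaternion.ext_iff] at hJ
  simp only [re_mul, imI_mul, imJ_mul, imK_mul, re_neg, imI_neg, imJ_neg, imK_neg, re_one,
    imI_one, imJ_one, imK_one] at hJ
  nlinarith [sq_nonneg J.imI, sq_nonneg J.imJ, sq_nonneg J.imK, sq_nonneg J.re]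

lemma normSq_eq_one_of_sq_eq_neg_one {J : ℍ[R]} (hJ : J ^ 2 = -1) : normSq J = 1 := by
  have h := sq_eq_neg_normSq.mpr (re_eq_zero_of_sq_eq_neg_one hJ)
  rw [hJ, neg_inj] at h
  exact coe_injective (h.symm.trans coe_one.symm)

end Quaternion

lemma Quaternion.norm_eq_one_of_sq_eq_neg_one {J : ℍ[ℝ]} (hJ : J ^ 2 = -1) : ‖J‖ = 1 := by
  have h := normSq_eq_norm_mul_self J
  rw [normSq_eq_one_of_sq_eq_neg_one hJ, eq_comm, mul_self_eq_one_iff] at h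
  exact h.resolve_right (by linarith [norm_nonneg J])

lemma Quaternion.star_mul_coe_mul_mul_coe (x y : ℍ[ℝ]) (a b : ℝ) :
    star (x * (a : ℍ[ℝ])) * (y * (b : ℍ[ℝ])) = (a * b) • (star x * y) := by
  rw [star_mul, star_coe, coe_mul_eq_smul, mul_coe_eq_smul, smul_mul_assoc, mul_smul_comm,
    smul_smul]

lemma measurableSet_sq_eq_neg_one : MeasurableSet {J : ℍ[ℝ] | J ^ 2 = -1} :=
  (isClosed_eq (by fun_prop) continuous_const).measurableSet

namespace Complex

variable {J : ℍ[ℝ]} (hJ : J * J = -1)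

lemma star_liftAux (hre : J.re = 0) (z : ℂ) :
    star (liftAux J hJ z) = liftAux J hJ (conj z) := by
  have hstar : star J = -J := Quaternion.star_eq_neg.mpr hre
  simp [liftAux_apply, hstar, Quaternion.algebraMap_def]

lemma normSq_liftAux (hre : J.re = 0) (z : ℂ) :
    Quaternion.normSq (liftAux J hJ z) = normSq z := by
  apply Quaternion.coe_injective
  rw [← Quaternion.star_mul_self, star_liftAux hJ hre, ← map_mul, ← normSq_eq_conj_mul_self]
  simp [Quaternion.algebraMap_def]

lemma norm_liftAux (hre : J.re = 0) (z : ℂ) : ‖liftAux J hJ z‖ = ‖z‖ := by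
  rw [← sq_eq_sq₀ (norm_nonneg _) (norm_nonneg _), sq, ← Quaternion.normSq_eq_norm_mul_self,
    normSq_liftAux hJ hre, normSq_eq_norm_sq]

lemma liftAux_ofReal_mul_exp (r θ : ℝ) :
    liftAux J hJ (r * exp (θ * I)) = ((r * Real.cos θ : ℝ) : ℍ[ℝ]) + (r * Real.sin θ) • J := by
  simp [liftAux_apply, Quaternion.algebraMap_def]

lemma conj_pow_mul_pow_ofReal_mul_exp (r θ : ℝ) (n k : ℕ) :
    conj (r * exp (θ * I)) ^ n * (r * exp (θ * I)) ^ k =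
      ((r ^ (n + k) : ℝ) : ℂ) * exp (((k - n : ℝ) * θ : ℝ) * I) := by
  rw [map_mul, conj_ofReal, ← exp_conj, map_mul, conj_ofReal, conj_I, mul_pow, mul_pow,
    ← exp_nat_mul, ← exp_nat_mul, mul_mul_mul_comm, ← pow_add, ← exp_add]
  push_cast
  ring_nf

end Complex

lemma radial_smul_star_pow_mul_pow_slice (w : ℝ → ℝ) (n k : ℕ) {J : ℍ[ℝ]} (hJ : J ^ 2 = -1)
    (r θ : ℝ) :
    w ‖((r * Real.cos θ : ℝ) : ℍ[ℝ]) + (r * Real.sin θ) • J‖ •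
        (star ((((r * Real.cos θ : ℝ) : ℍ[ℝ]) + (r * Real.sin θ) • J) ^ n) *
          (((r * Real.cos θ : ℝ) : ℍ[ℝ]) + (r * Real.sin θ) • J) ^ k) =
      (w |r| * r ^ (n + k)) •
        (Real.cos ((k - n : ℝ) * θ) • (1 : ℍ[ℝ]) + Real.sin ((k - n : ℝ) * θ) • J) := by
  have hJJ : J * J = -1 := by rw [← sq, hJ]
  have hre := Quaternion.re_eq_zero_of_sq_eq_neg_one hJ
  have h1 := Complex.liftAux_ofReal_mul_exp hJJ (w |r| * r ^ (n + k)) ((k - n : ℝ) * θ)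
  rw [← Complex.liftAux_ofReal_mul_exp hJJ, Complex.norm_liftAux hJJ hre, norm_mul,
    Complex.norm_exp_ofReal_mul_I, mul_one, Complex.norm_real, Real.norm_eq_abs, ← map_pow,
    ← map_pow, Complex.star_liftAux hJJ hre, ← map_mul, ← map_smul, map_pow,
    Complex.conj_pow_mul_pow_ofReal_mul_exp, Complex.real_smul, ← mul_assoc, ← Complex.ofReal_mul,
    h1, smul_add, smul_smul, smul_smul, ← Algebra.algebraMap_eq_smul_one,
    Quaternion.algebraMap_def]
section Trigonometric

open Real

lemma integral_cos_int_mul_Ioo {j : ℤ} (hj : j ≠ 0) :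
    ∫ θ in Set.Ioo 0 (2 * π), cos (j * θ) = 0 := by
  rw [← integral_Ioc_eq_integral_Ioo, ← intervalIntegral.integral_of_le (by positivity),
    intervalIntegral.integral_comp_mul_left cos (Int.cast_ne_zero.mpr hj), integral_cos,
    mul_zero, sin_zero, sub_zero, show (j : ℝ) * (2 * π) = (2 * j : ℤ) * π by push_cast; ring,
    sin_int_mul_pi, smul_zero]

lemma integral_sin_int_mul_Ioo (j : ℤ) :
    ∫ θ in Set.Ioo 0 (2 * π), sin (j * θ) = 0 := by
  rcases eq_or_ne j 0 with rfl | hj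
  · simp
  rw [← integral_Ioc_eq_integral_Ioo, ← intervalIntegral.integral_of_le (by positivity),
    intervalIntegral.integral_comp_mul_left sin (Int.cast_ne_zero.mpr hj), integral_sin,
    mul_zero, cos_zero, cos_int_mul_two_pi, sub_self, smul_zero]

lemma integral_prod_cos_smul_add_sin_smul {E : Type*} [NormedAddCommGroup E] [NormedSpace ℝ E]
    [MeasurableSpace E] {ν : Measure E} [IsFiniteMeasure ν] (hν : Integrable (fun x => x) ν)
    (a : E) {j : ℤ} (hj : j ≠ 0) :
    ∫ p : ℝ × E, (cos (j * p.1) • a + sin (j * p.1) • p.2)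
      ∂((volume.restrict (Set.Ioo 0 (2 * π))).prod ν) = 0 := by
  have hcos : Integrable (fun θ : ℝ => cos (j * θ)) (volume.restrict (Set.Ioo 0 (2 * π))) :=
    (by fun_prop : Continuous _).integrableOn_Icc.mono_set Set.Ioo_subset_Icc_self
  have hsin : Integrable (fun θ : ℝ => sin (j * θ)) (volume.restrict (Set.Ioo 0 (2 * π))) :=
    (by fun_prop : Continuous _).integrableOn_Icc.mono_set Set.Ioo_subset_Icc_self
  rw [integral_add (hcos.smul_prod (integrable_const a)) (hsin.smul_prod hν),
    integral_prod_smul (fun θ => cos (j * θ)) (fun _ => a),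
    integral_prod_smul (fun θ => sin (j * θ)) (fun x => x), integral_cos_int_mul_Ioo hj,
    integral_sin_int_mul_Ioo, zero_smul, zero_smul, add_zero]

end Trigonometric

def sphericalCoords (p : Fin 2 → ℝ) : ℍ[ℝ] :=
  Real.cos (p 0) • (⟨0, 1, 0, 0⟩ : ℍ[ℝ]) +
    (Real.sin (p 0) * Real.cos (p 1)) • (⟨0, 0, 1, 0⟩ : ℍ[ℝ]) +
    (Real.sin (p 0) * Real.sin (p 1)) • (⟨0, 0, 0, 1⟩ : ℍ[ℝ])

lemma contDiff_sphericalCoords : ContDiff ℝ 1 sphericalCoords := by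
  unfold sphericalCoords; fun_prop

lemma setOf_sq_eq_neg_one_subset_image_sphericalCoords :
    {J : ℍ[ℝ] | J ^ 2 = -1} ⊆ sphericalCoords '' Metric.closedBall 0 Real.pi := by
  intro J hJ
  have hre := Quaternion.re_eq_zero_of_sq_eq_neg_one hJ
  have hsum : J.imI ^ 2 + J.imJ ^ 2 + J.imK ^ 2 = 1 := by
    have := Quaternion.normSq_eq_one_of_sq_eq_neg_one hJ
    rw [Quaternion.normSq_def', hre] at this
    linarith
  set z : ℂ := ⟨J.imJ, J.imK⟩
  have hz : ‖z‖ = Real.sqrt (1 - J.imI ^ 2) := by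
    rw [Complex.norm_def, Complex.normSq_mk]; congr 1; linarith
  have hb : J.imI ∈ Set.Icc (-1) 1 := by
    rw [Set.mem_Icc, ← abs_le, ← sq_le_one_iff_abs_le_one]; nlinarith
  refine ⟨![Real.arccos J.imI, z.arg], ?_, ?_⟩
  · rw [Metric.mem_closedBall, dist_zero_right, pi_norm_le_iff_of_nonneg Real.pi_pos.le]
    intro i
    fin_cases i
    · simpa [abs_of_nonneg (Real.arccos_nonneg _)] using Real.arccos_le_pi _
    · simpa using Complex.abs_arg_le_pi z
  · ext <;> simp [sphericalCoords, hre, Real.cos_arccos hb.1 hb.2, Real.sin_arccos, ← hz,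
      Complex.norm_mul_cos_arg, Complex.norm_mul_sin_arg] <;> rfl

instance isFiniteMeasure_sigmaS : IsFiniteMeasure sigmaS := by
  constructor
  obtain ⟨K, hK⟩ := contDiff_sphericalCoords.locallyLipschitz.locallyLipschitzOn
    |>.exists_lipschitzOnWith_of_compact (isCompact_closedBall (0 : Fin 2 → ℝ) Real.pi)
  have hvol : (μH[2] : Measure (Fin 2 → ℝ)) = volume := by
    simpa using hausdorffMeasure_pi_real (ι := Fin 2)
  rw [sigmaS, Measure.restrict_apply_univ]
  calc μH[2] {J : ℍ[ℝ] | J ^ 2 = -1}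
      ≤ μH[2] (sphericalCoords '' Metric.closedBall 0 Real.pi) :=
        measure_mono setOf_sq_eq_neg_one_subset_image_sphericalCoords
    _ ≤ K ^ 2 * μH[2] (Metric.closedBall (0 : Fin 2 → ℝ) Real.pi) := by
        simpa using hK.hausdorffMeasure_image_le (d := 2) zero_le_two
    _ < ⊤ := by
        rw [hvol]
        exact ENNReal.mul_lt_top (by simp) measure_closedBall_lt_top

lemma integrable_id_sigmaS : Integrable (fun J => J) sigmaS := by
  refine (integrable_const (1 : ℝ)).mono' measurable_id.aestronglyMeasurable ?_
  filter_upwards [ae_restrict_mem measurableSet_sq_eq_neg_one] with J hJ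
  exact (Quaternion.norm_eq_one_of_sq_eq_neg_one hJ).le

lemma ae_prod_prod_sigmaS_sq_eq_neg_one {α β : Type*} [MeasurableSpace α] [MeasurableSpace β]
    (μ : Measure α) (ν : Measure β) [SFinite ν] :
    ∀ᵐ p : α × β × ℍ[ℝ] ∂(μ.prod (ν.prod sigmaS)), p.2.2 ^ 2 = -1 :=
  Measure.quasiMeasurePreserving_snd.ae
    (Measure.quasiMeasurePreserving_snd.ae (ae_restrict_mem measurableSet_sq_eq_neg_one))

theorem integral_radial_smul_star_pow_mul_pow_eq_zero {w : ℝ → ℝ} (hw : Measurable w) {n k : ℕ}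
    (hnk : n ≠ k) : ∫ q, w ‖q‖ • (star (q ^ n) * q ^ k) ∂slicedMeasure = 0 := by
  have hf : Measurable fun q : ℍ[ℝ] => w ‖q‖ • (star (q ^ n) * q ^ k) := by fun_prop
  have hΦ : Continuous fun p : ℝ × ℝ × ℍ[ℝ] =>
      ((p.1 * Real.cos p.2.1 : ℝ) : ℍ[ℝ]) + (p.1 * Real.sin p.2.1) • p.2.2 :=
    (Quaternion.continuous_coe.comp (by fun_prop)).add (by fun_prop)
  have hd : ((k : ℝ) - n) = ((k - n : ℤ) : ℝ) := by push_cast; ring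
  rw [slicedMeasure, integral_map hΦ.aemeasurable hf.aestronglyMeasurable,
    integral_congr_ae ((ae_prod_prod_sigmaS_sq_eq_neg_one _ _).mono fun p hp =>
      radial_smul_star_pow_mul_pow_slice w n k hp p.1 p.2.1),
    hd, integral_prod_smul (fun r => w |r| * r ^ (n + k)) (fun x : ℝ × ℍ[ℝ] =>
      Real.cos ((k - n : ℤ) * x.1) • (1 : ℍ[ℝ]) + Real.sin ((k - n : ℤ) * x.1) • x.2),
    integral_prod_cos_smul_add_sin_smul integrable_id_sigmaS 1
      (sub_ne_zero.2 (by exact_mod_cast hnk.symm)), smul_zero]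

/-- For `ψ_{m,n}(q) = qⁿ·₁F₁(−m; n+1; |q|²)` and `n ≠ k`,
`∫ conj(ψ_{m,n})·ψ_{m,k} e^{−|q|²} dλ = 0`. -/
theorem stmt3 (m n k : ℕ) (hnk : n ≠ k) :
    ∫ q : ℍ[ℝ],
        Real.exp (-‖q‖ ^ 2) •
          (star (q ^ n * ((F1 m ((n : ℝ) + 1) (‖q‖ ^ 2) : ℝ) : ℍ[ℝ])) *
            (q ^ k * ((F1 m ((k : ℝ) + 1) (‖q‖ ^ 2) : ℝ) : ℍ[ℝ])))
      ∂slicedMeasure = 0 := by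
  have hF1 : ∀ c, Continuous (F1 m c) := fun c => by unfold F1; fun_prop
  simp_rw [Quaternion.star_mul_coe_mul_mul_coe, smul_smul]
  exact integral_radial_smul_star_pow_mul_pow_eq_zero
    (w := fun t => Real.exp (-t ^ 2) * (F1 m (n + 1) (t ^ 2) * F1 m (k + 1) (t ^ 2)))
    (by fun_prop) hnk
end
end

section
/- For all nonnegative integers m, n and every q ∈ ℍ: qⁿ·₁F₁(−m; n+1; |q|²) = ((−1)^m·n!/(m+n)!)·H_{m+n,m}(q,q̄). -/
/-!
Reflecting the summation index `j ↦ m - j` in `H_{m+n,m}(q, q̄)` and using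
`q^(n+j) q̄^j = |q|^(2j) qⁿ` (as `q` commutes with `q̄`) writes the Hermite polynomial as `qⁿ`
times a real polynomial in `|q|²`. Its coefficients match those of `₁F₁(-m; n+1; ·)` through
`(-m)_j = (-1)^j m!/(m-j)!` and `(n+1)_j = (n+j)!/n!`.
-/

open MeasureTheory Quaternion

noncomputable section

/-- two-argument quaternionic Hermite polynomial `H_{m,n}(a,b)` -/
def qHermite2 (m n : ℕ) (a b : ℍ[ℝ]) : ℍ[ℝ] :=
  ∑ j ∈ Finset.range (min m n + 1),
    (((-1 : ℝ) ^ j * (Nat.factorial m * Nat.factorial n) /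
        (Nat.factorial j * (Nat.factorial (m - j) * Nat.factorial (n - j)))) : ℝ) •
      (a ^ (m - j) * b ^ (n - j))

/-- quaternionic Hermite polynomial `H_{m,n}(q, q̄)` -/
def qHermite (m n : ℕ) (q : ℍ[ℝ]) : ℍ[ℝ] := qHermite2 m n q (star q)

open Finset
open scoped Nat

section Pochhammer

variable {R : Type*} [CommRing R]

lemma prod_range_neg_natCast_add {m j : ℕ} (hj : j ≤ m) :
    ∏ i ∈ range j, (-(m : R) + i) = (-1) ^ j * m.descFactorial j := by
  calc ∏ i ∈ range j, (-(m : R) + i) = ∏ i ∈ range j, (-1) * ((m - i : ℕ) : R) :=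
        prod_congr rfl fun i hi => by
          rw [Nat.cast_sub (by rw [mem_range] at hi; omega)]
          ring
    _ = (-1) ^ j * m.descFactorial j := by
      rw [prod_mul_distrib, prod_const, card_range, Nat.descFactorial_eq_prod_range, Nat.cast_prod]

lemma prod_range_natCast_add_one_add (n j : ℕ) :
    ∏ i ∈ range j, ((n : R) + 1 + i) = (n + 1).ascFactorial j := by
  simp [Nat.ascFactorial_eq_prod_range]

end Pochhammer

lemma F1_natCast_add_one_eq_sum (m n : ℕ) (t : ℝ) :
    F1 m ((n : ℝ) + 1) t = ∑ j ∈ range (m + 1),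
      (-1) ^ j * m ! * n ! / (j ! * (m - j)! * (n + j)!) * t ^ j := by
  refine sum_congr rfl fun j hj => ?_
  have hjm : j ≤ m := Nat.lt_succ_iff.mp (mem_range.mp hj)
  have hdesc : ((m - j)! : ℝ) * m.descFactorial j = m ! := by
    exact_mod_cast Nat.factorial_mul_descFactorial hjm
  have hasc : (n ! : ℝ) * (n + 1).ascFactorial j = (n + j)! := by
    exact_mod_cast Nat.factorial_mul_ascFactorial n j
  rw [prod_range_neg_natCast_add hjm, prod_range_natCast_add_one_add, ← hdesc, ← hasc]
  have : ((n + 1).ascFactorial j : ℝ) ≠ 0 := by positivity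
  field_simp

lemma pow_add_mul_star_pow {R : Type*} [CommRing R] (q : ℍ[R]) (a c : ℕ) :
    q ^ (a + c) * star q ^ c = normSq q ^ c • q ^ a := by
  rw [pow_add, mul_assoc, ← star_pow, self_mul_star, ← map_pow, mul_coe_eq_smul]

lemma qHermite_add_left_eq_sum (m n : ℕ) (q : ℍ[ℝ]) :
    qHermite (m + n) m q = ∑ j ∈ range (m + 1),
      ((-1) ^ (m - j) * (m + n)! * m ! / (j ! * (m - j)! * (n + j)!) * (‖q‖ ^ 2) ^ j) • q ^ n := by
  rw [qHermite, qHermite2, min_eq_right (Nat.le_add_right m n), ← sum_range_reflect]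
  refine sum_congr rfl fun j hj => ?_
  have hjm : j ≤ m := Nat.lt_succ_iff.mp (mem_range.mp hj)
  rw [show m + 1 - 1 - j = m - j by omega, show m + n - (m - j) = n + j by omega,
    show m - (m - j) = j by omega, pow_add_mul_star_pow, normSq_eq_norm_mul_self, smul_smul]
  congr 1
  ring

lemma neg_one_pow_mul_neg_one_pow_sub {R : Type*} [Monoid R] [HasDistribNeg R] {m j : ℕ}
    (hj : j ≤ m) : (-1 : R) ^ m * (-1) ^ (m - j) = (-1) ^ j := by
  obtain ⟨k, rfl⟩ := Nat.exists_eq_add_of_le hj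
  rw [Nat.add_sub_cancel_left, pow_add, mul_assoc, ← pow_add, Even.neg_one_pow ⟨k, rfl⟩, mul_one]

/-- `qⁿ·₁F₁(−m; n+1; |q|²) = ((−1)^m·n!/(m+n)!)·H_{m+n,m}(q,q̄)`. -/
theorem stmt8 (m n : ℕ) (q : ℍ[ℝ]) :
    q ^ n * ((F1 m ((n : ℝ) + 1) (‖q‖ ^ 2) : ℝ) : ℍ[ℝ]) =
      (((-1 : ℝ) ^ m * Nat.factorial n / Nat.factorial (m + n)) : ℝ) •
        qHermite (m + n) m q := by
  rw [F1_natCast_add_one_eq_sum, qHermite_add_left_eq_sum, mul_coe_eq_smul, sum_smul, smul_sum]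
  refine sum_congr rfl fun j hj => ?_
  rw [smul_smul, ← neg_one_pow_mul_neg_one_pow_sub (Nat.lt_succ_iff.mp (mem_range.mp hj))]
  congr 1
  field_simp
end
end

section
/- For every nonnegative integer m and all complex numbers z, w, the series ∑_{n=0}^∞ H_{m,n}(z,z̄)·H_{n,m}(w,w̄)/n! converges absolutely and equals m!·e^{z̄ w}·L_m(|z−w|²). (This is the closed form of the reproducing kernel K_m(q,q') = (1/(π m!))·∑_{n≥0} H_{n,m}(q,q̄)·conj(H_{n,m}(q',q̄'))/n! of the generalized quaternionic Bargmann space of level m, for q, q' lying in a common slice of ℍ.) -/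
noncomputable section

/-- complex Hermite polynomial `H_{m,n}(z, z̄)` -/
def cHermite (m n : ℕ) (z : ℂ) : ℂ :=
  ∑ j ∈ Finset.range (min m n + 1),
    (((-1 : ℝ) ^ j * (Nat.factorial m * Nat.factorial n) /
        (Nat.factorial j * (Nat.factorial (m - j) * Nat.factorial (n - j))) : ℝ) : ℂ) *
      (z ^ (m - j) * (starRingEnd ℂ z) ^ (n - j))

/-- Laguerre polynomial `L_m(t) = ∑_{j=0}^m (−1)^j (m choose j) t^j/j!` -/
def laguerre (m : ℕ) (t : ℝ) : ℝ :=
  ∑ j ∈ Finset.range (m + 1),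
    (-1 : ℝ) ^ j * (Nat.choose m j) * t ^ j / Nat.factorial j

/-!
Write `H_{m,n}(z, z̄) = ∑_j (-1)^j C(m,j) n^(j) z^(m-j) z̄^(n-j)` with the falling factorial
`n^(j)`. The product `n^(j) n^(k)` linearises as `∑_i C(j,i) k^(i) n^(j+k-i)`, so every summand
of the series is a fixed finite combination of the terms `n^(c) x^(n-c) / n!` with `x = z̄ w`,
whose series converges absolutely to `e^x` (it is the `c`-th derivative of the exponential
series). The remaining finite sum of coefficients collapses by the binomial theorem, summed over
`j` and `k` separately, to `∑_i C(m,i)² i! (-|z - w|²)^(m-i) = m! L_m(|z - w|²)`.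
-/

open Finset Nat ComplexConjugate

theorem hasSum_descFactorial_mul_pow_div_factorial {𝕜 : Type*} [NormedField 𝕜]
    [NormedAlgebra ℚ 𝕜] [CompleteSpace 𝕜] (c : ℕ) (x : 𝕜) :
    HasSum (fun n : ℕ => (n.descFactorial c : 𝕜) * x ^ (n - c) / n !) (NormedSpace.exp x) := by
  have hshift (q : ℕ) :
      ((q + c).descFactorial c : 𝕜) * x ^ (q + c - c) / (q + c)! = x ^ q / q ! := by
    have hq : (q + c)! = q ! * (q + c).descFactorial c := by
      simpa using (Nat.factorial_mul_descFactorial (Nat.le_add_left c q)).symm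
    have := charZero_of_injective_algebraMap (algebraMap ℚ 𝕜).injective
    have hd : ((q + c).descFactorial c : 𝕜) ≠ 0 := by
      exact_mod_cast (Nat.descFactorial_pos.2 (Nat.le_add_left c q)).ne'
    rw [Nat.add_sub_cancel, hq, Nat.cast_mul]
    field_simp
  have hhead : ∑ i ∈ range c, ((i.descFactorial c : 𝕜) * x ^ (i - c) / i !) = 0 :=
    sum_eq_zero fun i hi => by
      rw [Nat.descFactorial_eq_zero_iff_lt.2 (mem_range.1 hi)]; simp
  rw [← add_zero (NormedSpace.exp x), ← hhead, ← hasSum_nat_add_iff]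
  simpa only [hshift] using NormedSpace.expSeries_div_hasSum_exp x

theorem descFactorial_mul_descFactorial_eq_sum (j k n : ℕ) :
    n.descFactorial j * n.descFactorial k =
      ∑ i ∈ range (k + 1), j.choose i * k.descFactorial i * n.descFactorial (j + k - i) := by
  by_cases hn : j ≤ n ∧ k ≤ n
  swap
  · have hzero : n.descFactorial j * n.descFactorial k = 0 := by
      rcases not_and_or.1 hn with h | h <;> simp [Nat.descFactorial_eq_zero_iff_lt.2 (not_le.1 h)]
    rw [hzero, eq_comm]
    refine sum_eq_zero fun i hi => ?_
    have hik : i ≤ k := Nat.lt_succ_iff.1 (mem_range.1 hi)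
    rcases Nat.lt_or_ge j i with hji | hij
    · simp [Nat.choose_eq_zero_of_lt hji]
    · rw [(Nat.descFactorial_eq_zero_iff_lt (k := j + k - i)).2 (by omega), Nat.mul_zero]
  obtain ⟨hj, hk⟩ := hn
  have hterm : ∀ i ∈ range (k + 1), j.choose i * k.descFactorial i * n.descFactorial (j + k - i)
      = n.descFactorial j * (k ! * (j.choose i * (n - j).choose (k - i))) := by
    intro i hi
    have hik : i ≤ k := Nat.lt_succ_iff.1 (mem_range.1 hi)
    have hsplit : (n - j).descFactorial (k - i) * n.descFactorial j = n.descFactorial (j + k - i) := by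
      have h := Nat.descFactorial_mul_descFactorial (k := j) (m := j + k - i) (n := n) (by omega)
      rwa [show j + k - i - j = k - i by omega] at h
    rw [← hsplit, Nat.descFactorial_eq_factorial_mul_choose k i,
      Nat.descFactorial_eq_factorial_mul_choose (n - j) (k - i),
      ← Nat.choose_mul_factorial_mul_factorial hik]
    ring
  have hvandermonde : n.choose k = ∑ i ∈ range (k + 1), j.choose i * (n - j).choose (k - i) := by
    rw [← Nat.add_sub_of_le hj, Nat.add_choose_eq, Nat.add_sub_cancel_left,
      Finset.Nat.sum_antidiagonal_eq_sum_range_succ_mk]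
  rw [sum_congr rfl hterm, ← mul_sum, ← mul_sum, ← hvandermonde,
    Nat.descFactorial_eq_factorial_mul_choose n k]

theorem descFactorial_mul_descFactorial_mul_pow_eq_sum {R : Type*} [CommRing R]
    (j k n : ℕ) (a b : R) :
    (n.descFactorial j * n.descFactorial k : R) * (a ^ (n - j) * b ^ (n - k)) =
      ∑ i ∈ range (k + 1), (j.choose i * k.descFactorial i : R) * (a ^ (k - i) * b ^ (j - i)) *
        (n.descFactorial (j + k - i) * (a * b) ^ (n - (j + k - i))) := by
  have hterm : ∀ i ∈ range (k + 1),
      (j.choose i * k.descFactorial i : R) * (a ^ (k - i) * b ^ (j - i)) *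
        (n.descFactorial (j + k - i) * (a * b) ^ (n - (j + k - i))) =
      (j.choose i * k.descFactorial i * n.descFactorial (j + k - i) : ℕ) *
        (a ^ (n - j) * b ^ (n - k)) := by
    intro i hi
    have hik : i ≤ k := Nat.lt_succ_iff.1 (mem_range.1 hi)
    rcases Nat.lt_or_ge j i with hji | hij
    · simp [Nat.choose_eq_zero_of_lt hji]
    rcases Nat.lt_or_ge n (j + k - i) with hn | hn
    · simp [Nat.descFactorial_eq_zero_iff_lt.2 hn]
    rw [show n - j = k - i + (n - (j + k - i)) by omega,
      show n - k = j - i + (n - (j + k - i)) by omega, pow_add, pow_add, mul_pow]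
    push_cast
    ring
  rw [sum_congr rfl hterm, ← sum_mul, ← Nat.cast_sum, ← descFactorial_mul_descFactorial_eq_sum,
    Nat.cast_mul]

theorem sum_neg_one_pow_mul_choose_mul_choose_mul_pow {R : Type*} [CommRing R] {i m : ℕ}
    (hi : i ≤ m) (x y : R) :
    ∑ j ∈ range (m + 1), (-1) ^ j * (m.choose j * j.choose i : R) * (x ^ (m - j) * y ^ (j - i)) =
      (-1) ^ i * m.choose i * (x - y) ^ (m - i) := by
  rw [← sum_range_add_sum_Ico _ (by omega : i ≤ m + 1), sum_Ico_eq_sum_range,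
    show m + 1 - i = m - i + 1 by omega, sub_eq_neg_add, add_pow, mul_sum]
  rw [sum_eq_zero fun j hj => by simp [Nat.choose_eq_zero_of_lt (mem_range.1 hj)], zero_add]
  refine sum_congr rfl fun l hl => ?_
  rw [← Nat.cast_mul, Nat.choose_mul (by omega : i ≤ i + l), Nat.add_sub_cancel_left,
    show m - (i + l) = m - i - l by omega, neg_pow y, pow_add]
  push_cast
  ring

theorem sum_choose_mul_choose_mul_descFactorial_mul_pow {R : Type*} [CommRing R] (m : ℕ)
    (a b c d : R) :
    ∑ j ∈ range (m + 1), ∑ k ∈ range (m + 1), ∑ i ∈ range (k + 1),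
      (-1) ^ (j + k) * (m.choose j * m.choose k * j.choose i * k.descFactorial i : R) *
        (a ^ (m - j) * b ^ (j - i)) * (c ^ (m - k) * d ^ (k - i)) =
      ∑ i ∈ range (m + 1), (m.choose i ^ 2 * i ! : R) * ((a - b) * (c - d)) ^ (m - i) := by
  have hext : ∀ j, ∀ k ∈ range (m + 1), ∑ i ∈ range (k + 1),
      (-1) ^ (j + k) * (m.choose j * m.choose k * j.choose i * k.descFactorial i : R) *
        (a ^ (m - j) * b ^ (j - i)) * (c ^ (m - k) * d ^ (k - i)) =
      ∑ i ∈ range (m + 1),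
      (-1) ^ (j + k) * (m.choose j * m.choose k * j.choose i * k.descFactorial i : R) *
        (a ^ (m - j) * b ^ (j - i)) * (c ^ (m - k) * d ^ (k - i)) := by
    intro j k hk
    refine sum_subset (range_subset_range.2 (mem_range.1 hk)) fun i _ hi => ?_
    simp [Nat.descFactorial_eq_zero_iff_lt.2 (Nat.succ_le_iff.1 (not_lt.1 (mt mem_range.2 hi)))]
  calc _ = ∑ i ∈ range (m + 1),
        (∑ j ∈ range (m + 1), (-1) ^ j * (m.choose j * j.choose i : R) * (a ^ (m - j) * b ^ (j - i))) *
          (i ! * ∑ k ∈ range (m + 1),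
            (-1) ^ k * (m.choose k * k.choose i : R) * (c ^ (m - k) * d ^ (k - i))) := by
        rw [sum_congr rfl fun j _ => sum_congr rfl (hext j),
          sum_congr rfl fun j _ => sum_comm, sum_comm]
        refine sum_congr rfl fun i _ => ?_
        rw [mul_sum, sum_mul_sum]
        refine sum_congr rfl fun j _ => sum_congr rfl fun k _ => ?_
        rw [Nat.descFactorial_eq_factorial_mul_choose]
        push_cast
        ring
    _ = _ := by
        refine sum_congr rfl fun i hi => ?_
        have hi : i ≤ m := Nat.lt_succ_iff.1 (mem_range.1 hi)
        rw [sum_neg_one_pow_mul_choose_mul_choose_mul_pow hi,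
          sum_neg_one_pow_mul_choose_mul_choose_mul_pow hi, mul_pow]
        have hsign : ((-1 : R) ^ i) * (-1) ^ i = 1 := by rw [← mul_pow]; simp
        linear_combination
          ((m.choose i : R) ^ 2 * i ! * (a - b) ^ (m - i) * (c - d) ^ (m - i)) * hsign

theorem factorial_mul_laguerre (m : ℕ) (t : ℝ) :
    (m ! : ℝ) * laguerre m t = ∑ i ∈ range (m + 1), (m.choose i ^ 2 * i ! : ℝ) * (-t) ^ (m - i) := by
  rw [laguerre, mul_sum, ← sum_range_reflect]
  refine sum_congr rfl fun j hj => ?_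
  have hj : j ≤ m := Nat.lt_succ_iff.1 (mem_range.1 hj)
  have hfac := Nat.choose_mul_factorial_mul_factorial hj
  rw [Nat.add_sub_cancel, Nat.choose_symm hj, neg_pow, ← hfac]
  push_cast
  field_simp
  ring

theorem summable_norm_finset_sum {ι β E : Type*} [SeminormedAddCommGroup E] (s : Finset ι)
    {f : ι → β → E} (hf : ∀ i ∈ s, Summable fun n => ‖f i n‖) :
    Summable fun n => ‖∑ i ∈ s, f i n‖ :=
  (summable_sum hf).of_nonneg_of_le (fun _ => norm_nonneg _) fun _ => norm_sum_le _ _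

theorem cHermite_eq_sum_descFactorial (m n : ℕ) (z : ℂ) :
    cHermite m n z = ∑ j ∈ range (m + 1),
      (-1) ^ j * (m.choose j * n.descFactorial j : ℂ) * (z ^ (m - j) * conj z ^ (n - j)) := by
  rw [cHermite]
  refine sum_subset_zero_on_sdiff (range_subset_range.2 (by omega)) (fun j hj => ?_)
    (fun j hj => ?_)
  · rw [mem_sdiff, mem_range, mem_range] at hj
    simp [(Nat.descFactorial_eq_zero_iff_lt (n := n) (k := j)).2 (by omega)]
  · have hj : j ≤ m ∧ j ≤ n := by rw [mem_range] at hj; omega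
    have hm := Nat.choose_mul_factorial_mul_factorial hj.1
    have hn := Nat.factorial_mul_descFactorial hj.2
    congr 1
    rw [← hm, ← hn]
    push_cast
    rw [div_eq_iff (by simp [Nat.factorial_ne_zero])]
    ring

theorem conj_cHermite (m n : ℕ) (z : ℂ) : conj (cHermite m n z) = cHermite n m z := by
  rw [cHermite, cHermite, map_sum, min_comm]
  refine sum_congr rfl fun j _ => ?_
  rw [mul_comm (m ! : ℝ), mul_comm ((m - j)! : ℝ)]
  simp only [map_mul, map_pow, Complex.conj_conj, Complex.conj_ofReal]
  ring

theorem cHermite_mul_cHermite_div_factorial (m n : ℕ) (z w : ℂ) :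
    cHermite m n z * cHermite n m w / n ! =
      ∑ j ∈ range (m + 1), ∑ k ∈ range (m + 1), ∑ i ∈ range (k + 1),
        (-1) ^ (j + k) * (m.choose j * m.choose k * j.choose i * k.descFactorial i : ℂ) *
          (z ^ (m - j) * w ^ (j - i)) * (conj w ^ (m - k) * conj z ^ (k - i)) *
          (n.descFactorial (j + k - i) * (conj z * w) ^ (n - (j + k - i)) / n !) := by
  rw [← conj_cHermite m n w, cHermite_eq_sum_descFactorial, cHermite_eq_sum_descFactorial,
    map_sum, sum_mul_sum, sum_div]
  refine sum_congr rfl fun j _ => ?_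
  rw [sum_div]
  refine sum_congr rfl fun k _ => ?_
  calc _ = (-1) ^ (j + k) * (m.choose j * m.choose k : ℂ) * (z ^ (m - j) * conj w ^ (m - k)) / n ! *
        ((n.descFactorial j * n.descFactorial k : ℂ) * (conj z ^ (n - j) * w ^ (n - k))) := by
        simp only [map_mul, map_pow, map_neg, map_one, map_natCast, Complex.conj_conj]
        ring
    _ = _ := by
        rw [descFactorial_mul_descFactorial_mul_pow_eq_sum, mul_sum]
        refine sum_congr rfl fun i _ => ?_
        ring

theorem summable_norm_mul_descFactorial_mul_pow_div_factorial (c : ℕ) (a x : ℂ) :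
    Summable fun n : ℕ => ‖a * (n.descFactorial c * x ^ (n - c) / n !)‖ := by
  simp only [norm_mul, norm_div, norm_pow, Complex.norm_natCast]
  exact (hasSum_descFactorial_mul_pow_div_factorial (𝕜 := ℝ) c ‖x‖).summable.mul_left ‖a‖

theorem summable_norm_cHermite_mul_cHermite_div_factorial (m : ℕ) (z w : ℂ) :
    Summable fun n : ℕ => ‖cHermite m n z * cHermite n m w / (n ! : ℂ)‖ := by
  simp_rw [cHermite_mul_cHermite_div_factorial]
  exact summable_norm_finset_sum _ fun j _ => summable_norm_finset_sum _ fun k _ =>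
    summable_norm_finset_sum _ fun i _ => summable_norm_mul_descFactorial_mul_pow_div_factorial _ _ _

theorem hasSum_cHermite_mul_cHermite_div_factorial (m : ℕ) (z w : ℂ) :
    HasSum (fun n : ℕ => cHermite m n z * cHermite n m w / n !)
      (m ! * Complex.exp (conj z * w) * (laguerre m (‖z - w‖ ^ 2) : ℂ)) := by
  have hseries := hasSum_sum fun j (_ : j ∈ range (m + 1)) =>
    hasSum_sum fun k (_ : k ∈ range (m + 1)) => hasSum_sum fun i (_ : i ∈ range (k + 1)) =>
      (hasSum_descFactorial_mul_pow_div_factorial (j + k - i) (conj z * w)).mul_left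
        ((-1) ^ (j + k) * (m.choose j * m.choose k * j.choose i * k.descFactorial i : ℂ) *
          (z ^ (m - j) * w ^ (j - i)) * (conj w ^ (m - k) * conj z ^ (k - i)))
  simp only [← sum_mul, sum_choose_mul_choose_mul_descFactorial_mul_pow,
    ← Complex.exp_eq_exp_ℂ] at hseries
  have hnorm : (z - w) * (conj w - conj z) = -(‖z - w‖ : ℂ) ^ 2 := by
    rw [show conj w - conj z = -conj (z - w) by simp, mul_neg, Complex.mul_conj']
  have hlag := congrArg (fun x : ℝ => (x : ℂ)) (factorial_mul_laguerre m (‖z - w‖ ^ 2))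
  push_cast at hlag
  have hvalue : (m ! : ℂ) * Complex.exp (conj z * w) * (laguerre m (‖z - w‖ ^ 2) : ℂ) =
      (∑ i ∈ range (m + 1), (m.choose i ^ 2 * i ! : ℂ) * ((z - w) * (conj w - conj z)) ^ (m - i)) *
        Complex.exp (conj z * w) := by
    rw [hnorm, ← hlag]
    ring
  simp_rw [hvalue, cHermite_mul_cHermite_div_factorial]
  exact hseries

/-- `∑_{n≥0} H_{m,n}(z,z̄)·H_{n,m}(w,w̄)/n!` converges absolutely and
equals `m!·e^{z̄w}·L_m(|z−w|²)`. -/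
theorem stmt11 (m : ℕ) (z w : ℂ) :
    Summable (fun n : ℕ => ‖cHermite m n z * cHermite n m w / (Nat.factorial n : ℂ)‖) ∧
      ∑' n : ℕ, cHermite m n z * cHermite n m w / (Nat.factorial n : ℂ) =
        (Nat.factorial m : ℂ) * Complex.exp (starRingEnd ℂ z * w) *
          ((laguerre m (‖z - w‖ ^ 2) : ℝ) : ℂ) :=
  ⟨summable_norm_cHermite_mul_cHermite_div_factorial m z w,
    (hasSum_cHermite_mul_cHermite_div_factorial m z w).tsum_eq⟩
end
end
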